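/- Let n ≥ 1 and let {P_t}_{t>0} be a family of bounded linear operators on L²(ℝⁿ;ℂ) satisfying L² off-diagonal (Gaffney) estimates with constants (C₁, c). Let M be a positive integer and N > 0. Then there exists a constant C > 0, depending only on n, M, N, C₁, c, such that for every cube Q ⊆ ℝⁿ, every f ∈ L²(ℝⁿ;ℂ) vanishing a.e. outside Q, and every integer j ≥ 1: ‖1_{S_j(Q)} · ((I − P_{ℓ(Q)²})^M f)‖_{L²} ≤ C · 2^{−jN} · ‖f‖_{L²}, where (I − P_{ℓ(Q)²})^M denotes the M-fold composition of I − P_{ℓ(Q)²}. -/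

import Mathlib

open MeasureTheory ENNReal

noncomputable section

abbrev Euc (n : ℕ) := EuclideanSpace ℝ (Fin n)

abbrev L2 (n : ℕ) := MeasureTheory.Lp ℂ 2 (volume : Measure (Euc n))

/-- Distance between two sets: `inf {dist x y : x ∈ E, y ∈ F}` (junk value `0` if empty). -/
noncomputable def setDist {X : Type*} [PseudoMetricSpace X] (E F : Set X) : ℝ :=
  sInf (Set.image2 dist E F)

/-- The family `S : ℝ → L²(ℝⁿ;ℂ) →L L²(ℝⁿ;ℂ)` satisfies L² off-diagonal (Gaffney)
estimates with constants `C, c > 0`. -/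
def Gaffney (n : ℕ) (S : ℝ → L2 n →L[ℂ] L2 n) (C c : ℝ) : Prop :=
  ∀ E F : Set (Euc n), IsClosed E → IsClosed F → ∀ t : ℝ, 0 < t →
    ∀ f : L2 n, (∀ᵐ x ∂(volume : Measure (Euc n)), x ∉ E → f x = 0) →
      eLpNorm (F.indicator (⇑(S t f))) 2 volume ≤
        ENNReal.ofReal (C * Real.exp (-(setDist E F) ^ 2 / (c * t))) *
          eLpNorm (⇑f) 2 volume

/-- The closed axis-parallel cube with center `z` and side length `ℓ`. -/
def cube {n : ℕ} (z : Euc n) (ℓ : ℝ) : Set (Euc n) :=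
  {y | ∀ i, |y i - z i| ≤ ℓ / 2}

/-!
The identity satisfies Gaffney estimates with constant `1`, and Gaffney families are stable under
differences. They are also stable under composition, at the price of doubling the constant and
quadrupling `c`: to estimate `1_F S T f` for `f` supported in `E`, split `T f` along the closed
`d/2`-neighbourhood of `E`, `d = dist(E, F)`; the near part is `d/2` away from `F`, the far part
is `d/2` away from `E`. Hence `(I - P_t)^M` satisfies Gaffney estimates with constants
`(2(1 + C₁))^M` and `4^M c`. The cube `Q` and the annulus `S_j(Q)` are at distance at least
`(2^{j-1} - 1) ℓ(Q) / 2`, so the Gaussian factor is `exp(-(2^{j-1} - 1)² / (4^{M+1} c))`, which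
decays faster than any `2^{-jN}`.
-/

section SetDist

variable {X : Type*} [PseudoMetricSpace X] {E F : Set X}

theorem setDist_nonneg (E F : Set X) : 0 ≤ setDist E F :=
  Real.sInf_nonneg (by rintro _ ⟨x, -, y, -, rfl⟩; exact dist_nonneg)

theorem setDist_le_dist {x y : X} (hx : x ∈ E) (hy : y ∈ F) : setDist E F ≤ dist x y :=
  csInf_le ⟨0, by rintro _ ⟨x, -, y, -, rfl⟩; exact dist_nonneg⟩ (Set.mem_image2_of_mem hx hy)

theorem le_setDist (hE : E.Nonempty) (hF : F.Nonempty) {d : ℝ}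
    (h : ∀ x ∈ E, ∀ y ∈ F, d ≤ dist x y) : d ≤ setDist E F :=
  le_csInf (hE.image2 hF) (by rintro _ ⟨x, hx, y, hy, rfl⟩; exact h x hx y hy)

theorem le_dist_of_mem_cthickening {d : ℝ} (hd : 0 ≤ d) (h : ∀ x ∈ E, ∀ y ∈ F, d ≤ dist x y)
    {x y : X} (hx : x ∈ Metric.cthickening (d / 2) E) (hy : y ∈ F) : d / 2 ≤ dist x y := by
  have hyE : ENNReal.ofReal d ≤ Metric.infEDist y E :=
    Metric.le_infEDist.2 fun e he => by
      rw [edist_dist, dist_comm]; exact ENNReal.ofReal_le_ofReal (h e he y hy)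
  have key : ENNReal.ofReal (d / 2) + ENNReal.ofReal (d / 2) ≤
      ENNReal.ofReal (d / 2) + ENNReal.ofReal (dist x y) := by
    rw [← ENNReal.ofReal_add (by positivity) (by positivity), add_halves, ← edist_dist,
      edist_comm]
    exact hyE.trans (Metric.infEDist_le_infEDist_add_edist.trans
      (add_le_add_left (Metric.mem_cthickening_iff.1 hx) _))
  exact (ENNReal.ofReal_le_ofReal_iff dist_nonneg).1
    ((ENNReal.add_le_add_iff_left ENNReal.ofReal_ne_top).1 key)

theorem le_dist_of_le_infEDist {r : ℝ} {x y : X} (hx : x ∈ E)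
    (hy : ENNReal.ofReal r ≤ Metric.infEDist y E) : r ≤ dist x y := by
  rw [dist_comm, ← ENNReal.ofReal_le_ofReal_iff dist_nonneg, ← edist_dist]
  exact hy.trans (Metric.infEDist_le_edist_of_mem hx)

end SetDist

section Lp

variable {α E : Type*} [MeasurableSpace α] [NormedAddCommGroup E] {p : ℝ≥0∞} {μ : Measure α}
  {s : Set α}

theorem MeasureTheory.Lp.exists_eq_add_indicator (g : Lp E p μ) (hs : MeasurableSet s) :
    ∃ g₁ g₂ : Lp E p μ, g = g₁ + g₂ ∧ g₁ =ᵐ[μ] s.indicator g ∧ g₂ =ᵐ[μ] sᶜ.indicator g := by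
  set g₁ := ((Lp.memLp g).indicator hs).toLp _
  have hg₁ : g₁ =ᵐ[μ] s.indicator g := MemLp.coeFn_toLp _
  refine ⟨g₁, g - g₁, by abel, hg₁, ?_⟩
  filter_upwards [Lp.coeFn_sub g g₁, hg₁] with x hsub hx
  rw [hsub, Pi.sub_apply, hx, Set.indicator_compl, Pi.sub_apply]

theorem MeasureTheory.Lp.eLpNorm_indicator_add_le (hs : MeasurableSet s) (hp : 1 ≤ p)
    (f g : Lp E p μ) :
    eLpNorm (s.indicator ⇑(f + g)) p μ ≤
      eLpNorm (s.indicator f) p μ + eLpNorm (s.indicator g) p μ := by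
  have hfg : s.indicator ⇑(f + g) =ᵐ[μ] s.indicator f + s.indicator g := by
    filter_upwards [Lp.coeFn_add f g] with x hx
    classical
    rw [← Set.indicator_add', Set.indicator_apply, Set.indicator_apply, hx]
  rw [eLpNorm_congr_ae hfg]
  exact eLpNorm_add_le ((Lp.aestronglyMeasurable f).indicator hs)
    ((Lp.aestronglyMeasurable g).indicator hs) hp

theorem MeasureTheory.Lp.eLpNorm_indicator_sub_le (hs : MeasurableSet s) (hp : 1 ≤ p)
    (f g : Lp E p μ) :
    eLpNorm (s.indicator ⇑(f - g)) p μ ≤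
      eLpNorm (s.indicator f) p μ + eLpNorm (s.indicator g) p μ := by
  have hfg : s.indicator ⇑(f - g) =ᵐ[μ] s.indicator f - s.indicator g := by
    filter_upwards [Lp.coeFn_sub f g] with x hx
    classical
    rw [← Set.indicator_sub', Set.indicator_apply, Set.indicator_apply, hx]
  rw [eLpNorm_congr_ae hfg]
  exact eLpNorm_sub_le ((Lp.aestronglyMeasurable f).indicator hs)
    ((Lp.aestronglyMeasurable g).indicator hs) hp

end Lp

theorem gaffney_one (n : ℕ) (c : ℝ) : Gaffney n (fun _ => 1) 1 c := by
  intro E F hE hF t ht f hf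
  rcases (setDist_nonneg E F).eq_or_lt with hd | hd
  · simpa [← hd] using eLpNorm_indicator_le (f := ⇑f)
  · have hF0 : F.indicator f =ᵐ[volume] 0 := by
      filter_upwards [hf] with x hx
      refine Set.indicator_apply_eq_zero.2 fun hxF => hx fun hxE => ?_
      simpa using hd.trans_le (setDist_le_dist hxE hxF)
    simp [eLpNorm_congr_ae hF0]

namespace Gaffney

variable {n : ℕ} {S T : ℝ → L2 n →L[ℂ] L2 n} {C C' c : ℝ}

theorem eLpNorm_indicator_le_of_le_dist (hS : Gaffney n S C c) (hC : 0 ≤ C) (hc : 0 < c)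
    {E F : Set (Euc n)} (hE : IsClosed E) (hF : IsClosed F) {d : ℝ} (hd : 0 ≤ d)
    (hdist : ∀ x ∈ E, ∀ y ∈ F, d ≤ dist x y) {t : ℝ} (ht : 0 < t) {f : L2 n}
    (hf : ∀ᵐ x ∂(volume : Measure (Euc n)), x ∉ E → f x = 0) :
    eLpNorm (F.indicator (S t f)) 2 volume ≤
      ENNReal.ofReal (C * Real.exp (-d ^ 2 / (c * t))) * eLpNorm f 2 volume := by
  have hSf := hS E F hE hF t ht f hf
  rcases E.eq_empty_or_nonempty with rfl | hEne
  · have hf0 : eLpNorm f 2 volume = 0 :=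
      eLpNorm_eq_zero_iff (Lp.aestronglyMeasurable f) two_ne_zero |>.2 <| by
        filter_upwards [hf] with x hx using hx (Set.notMem_empty x)
    simpa [hf0] using hSf
  rcases F.eq_empty_or_nonempty with rfl | hFne
  · simp
  refine hSf.trans (mul_le_mul_left (ENNReal.ofReal_le_ofReal ?_) _)
  have hdE := le_setDist hEne hFne hdist
  gcongr

theorem eLpNorm_apply_le (hS : Gaffney n S C c) (hC : 0 ≤ C) (hc : 0 < c) {t : ℝ} (ht : 0 < t)
    (f : L2 n) : eLpNorm (S t f) 2 volume ≤ ENNReal.ofReal C * eLpNorm f 2 volume := by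
  simpa using hS.eLpNorm_indicator_le_of_le_dist hC hc isClosed_univ isClosed_univ le_rfl
    (fun _ _ _ _ => dist_nonneg) ht (ae_of_all _ fun x hx => absurd (Set.mem_univ x) hx)

theorem mono (hS : Gaffney n S C c) (hC : 0 ≤ C) (hc : 0 < c) {c' : ℝ} (hcc' : c ≤ c') :
    Gaffney n S C c' := by
  intro E F hE hF t ht f hf
  refine (hS E F hE hF t ht f hf).trans (mul_le_mul_left (ENNReal.ofReal_le_ofReal ?_) _)
  rw [neg_div, neg_div]
  gcongr

theorem sub (hS : Gaffney n S C c) (hT : Gaffney n T C' c) (hC : 0 ≤ C) (hC' : 0 ≤ C') :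
    Gaffney n (fun t => S t - T t) (C + C') c := by
  intro E F hE hF t ht f hf
  calc eLpNorm (F.indicator ((S t - T t) f)) 2 volume
      ≤ eLpNorm (F.indicator (S t f)) 2 volume + eLpNorm (F.indicator (T t f)) 2 volume :=
        Lp.eLpNorm_indicator_sub_le hF.measurableSet one_le_two _ _
    _ ≤ ENNReal.ofReal (C * Real.exp (-setDist E F ^ 2 / (c * t))) * eLpNorm f 2 volume +
        ENNReal.ofReal (C' * Real.exp (-setDist E F ^ 2 / (c * t))) * eLpNorm f 2 volume :=
        add_le_add (hS E F hE hF t ht f hf) (hT E F hE hF t ht f hf)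
    _ = _ := by
        rw [← add_mul, ← ENNReal.ofReal_add (by positivity) (by positivity), add_mul]

theorem comp (hS : Gaffney n S C c) (hT : Gaffney n T C' c) (hC : 0 ≤ C) (hC' : 0 ≤ C')
    (hc : 0 < c) : Gaffney n (fun t => S t * T t) (2 * C * C') (4 * c) := by
  intro E F hE hF t ht f hf
  set d := setDist E F
  have hd : 0 ≤ d := setDist_nonneg E F
  set G := Metric.cthickening (d / 2) E
  set H := {y | ENNReal.ofReal (d / 2) ≤ Metric.infEDist y E}
  have hH : IsClosed H := isClosed_le continuous_const Metric.continuous_infEDist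
  have hGH : Gᶜ ⊆ H := fun y hy => (not_le.1 (mt Metric.mem_cthickening_iff.2 hy)).le
  obtain ⟨g₁, g₂, hg, hg₁, hg₂⟩ :=
    Lp.exists_eq_add_indicator (T t f) (Metric.isClosed_cthickening.measurableSet (s := G))
  have hdist : ∀ x ∈ E, ∀ y ∈ F, d ≤ dist x y := fun _ hx _ hy => setDist_le_dist hx hy
  set e := ENNReal.ofReal (C * C' * Real.exp (-d ^ 2 / (4 * c * t))) * eLpNorm f 2 volume
  have hexp : -(d / 2) ^ 2 / (c * t) = -d ^ 2 / (4 * c * t) := by ring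
  have near : eLpNorm (F.indicator (S t g₁)) 2 volume ≤ e := by
    calc _ ≤ ENNReal.ofReal (C * Real.exp (-(d / 2) ^ 2 / (c * t))) * eLpNorm g₁ 2 volume :=
          hS.eLpNorm_indicator_le_of_le_dist hC hc Metric.isClosed_cthickening hF (by positivity)
            (fun _ hx _ hy => le_dist_of_mem_cthickening hd hdist hx hy) ht
            (by filter_upwards [hg₁] with x hx hxG; rw [hx, Set.indicator_of_notMem hxG])
      _ ≤ ENNReal.ofReal (C * Real.exp (-(d / 2) ^ 2 / (c * t))) *
            (ENNReal.ofReal C' * eLpNorm f 2 volume) := by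
          gcongr
          rw [eLpNorm_congr_ae hg₁]
          exact (eLpNorm_indicator_le _).trans (hT.eLpNorm_apply_le hC' hc ht f)
      _ = e := by
          rw [← mul_assoc, ← ENNReal.ofReal_mul (by positivity), hexp]
          congr 2; ring
  have far : eLpNorm (F.indicator (S t g₂)) 2 volume ≤ e := by
    calc _ ≤ ENNReal.ofReal C * eLpNorm g₂ 2 volume :=
          (eLpNorm_indicator_le _).trans (hS.eLpNorm_apply_le hC hc ht g₂)
      _ ≤ ENNReal.ofReal C * eLpNorm (H.indicator (T t f)) 2 volume := by
          gcongr
          rw [eLpNorm_congr_ae hg₂]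
          exact eLpNorm_mono fun x => norm_indicator_le_of_subset hGH _ x
      _ ≤ ENNReal.ofReal C *
            (ENNReal.ofReal (C' * Real.exp (-(d / 2) ^ 2 / (c * t))) * eLpNorm f 2 volume) := by
          gcongr
          exact hT.eLpNorm_indicator_le_of_le_dist hC' hc hE hH (by positivity)
            (fun _ hx _ hy => le_dist_of_le_infEDist hx hy) ht hf
      _ = e := by
          rw [← mul_assoc, ← ENNReal.ofReal_mul hC, hexp]
          congr 2; ring
  calc eLpNorm (F.indicator ((S t * T t) f)) 2 volume
      ≤ eLpNorm (F.indicator (S t g₁)) 2 volume + eLpNorm (F.indicator (S t g₂)) 2 volume := by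
        rw [show (S t * T t) f = S t g₁ + S t g₂ by rw [← map_add, ← hg]; rfl]
        exact Lp.eLpNorm_indicator_add_le hF.measurableSet one_le_two _ _
    _ ≤ e + e := add_le_add near far
    _ = _ := by
        rw [← add_mul, ← ENNReal.ofReal_add (by positivity) (by positivity)]
        congr 2; ring

theorem pow (hT : Gaffney n T C c) (hC : 0 ≤ C) (hc : 0 < c) (k : ℕ) :
    Gaffney n (fun t => T t ^ k) ((2 * C) ^ k) (4 ^ k * c) := by
  induction k with
  | zero => simpa using gaffney_one n c
  | succ k ih =>
    have hT' := hT.mono (c' := 4 ^ k * c) hC hc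
      (le_mul_of_one_le_left hc.le (one_le_pow₀ (by norm_num)))
    convert hT'.comp ih hC (by positivity) (by positivity) using 1
    · simp only [pow_succ']
    · ring
    · ring

end Gaffney

section Cube

variable {n : ℕ}

theorem isClosed_cube (z : Euc n) (ℓ : ℝ) : IsClosed (cube z ℓ) := by
  simp only [cube, Set.ofPred_forall]
  exact isClosed_iInter fun i => isClosed_le (by fun_prop) continuous_const

theorem isClosed_setOf_exists_le_abs_sub (z : Euc n) (r : ℝ) :
    IsClosed {y : Euc n | ∃ i, r ≤ |y i - z i|} := by
  simp only [Set.ofPred_exists]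
  exact isClosed_iUnion_of_finite fun i => isClosed_le continuous_const (by fun_prop)

theorem sub_div_two_le_dist_of_mem_cube {z x y : Euc n} {ℓ r : ℝ} (hx : x ∈ cube z ℓ)
    (hy : ∃ i, r / 2 ≤ |y i - z i|) : (r - ℓ) / 2 ≤ dist x y := by
  obtain ⟨i, hi⟩ := hy
  have hxy : |x i - y i| ≤ dist x y := by simpa [Real.dist_eq] using PiLp.dist_apply_le x y i
  linarith [hx i, abs_sub_le (y i) (x i) (z i), abs_sub_comm (x i) (y i)]

end Cube

theorem exists_exp_neg_mul_sq_le (β N : ℝ) (hβ : 0 < β) :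
    ∃ K > 0, ∀ j : ℕ, 1 ≤ j →
      Real.exp (-β * ((2 : ℝ) ^ (j - 1) - 1) ^ 2) ≤ K * (2 : ℝ) ^ (-(j : ℝ) * N) := by
  set α := N * Real.log 2 with hα
  refine ⟨Real.exp (α ^ 2 / (4 * β) + α), Real.exp_pos _, fun j hj => ?_⟩
  have hpow : (2 : ℝ) ^ (-(j : ℝ) * N) = Real.exp (-(j * α)) := by
    rw [Real.rpow_def_of_pos two_pos, hα]; ring_nf
  set x : ℝ := j - 1 with hx
  have hx0 : 0 ≤ x := by simp [hx, hj]
  have hxu : x ≤ 2 ^ (j - 1) - 1 := by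
    have := one_add_mul_le_pow (a := (1 : ℝ)) (by norm_num) (j - 1)
    norm_num [hj] at this
    linarith
  have hsq : β * x ^ 2 ≤ β * (2 ^ (j - 1) - 1) ^ 2 := by gcongr
  -- completing the square: `4β (α x - β x²) = α² - (2β x - α)²`
  have hquad : α * x - β * x ^ 2 ≤ α ^ 2 / (4 * β) := by
    rw [le_div_iff₀ (by positivity)]
    nlinarith [sq_nonneg (2 * β * x - α)]
  rw [hpow, ← Real.exp_add, Real.exp_le_exp]
  linarith

theorem statement7_general (n : ℕ) (M : ℕ) (N C₁ c : ℝ)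
    (hC₁ : 0 < C₁) (hc : 0 < c) :
    ∃ C > 0, ∀ P : ℝ → L2 n →L[ℂ] L2 n, Gaffney n P C₁ c →
      ∀ (z : Euc n) (ℓ : ℝ), 0 < ℓ →
      ∀ f : L2 n, (∀ᵐ x ∂(volume : Measure (Euc n)), x ∉ cube z ℓ → f x = 0) →
      ∀ j : ℕ, 1 ≤ j →
        eLpNorm ((cube z ((2 : ℝ) ^ j * ℓ) \ cube z ((2 : ℝ) ^ (j - 1) * ℓ)).indicator
            (⇑((((1 : L2 n →L[ℂ] L2 n) - P (ℓ ^ 2)) ^ M) f))) 2 volume ≤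
          ENNReal.ofReal (C * (2 : ℝ) ^ (-(j : ℝ) * N)) * eLpNorm (⇑f) 2 volume := by
  obtain ⟨K, hK, hdecay⟩ := exists_exp_neg_mul_sq_le (1 / (4 * (4 ^ M * c))) N (by positivity)
  refine ⟨(2 * (1 + C₁)) ^ M * K, by positivity, fun P hP z ℓ hℓ f hf j hj => ?_⟩
  have hQ : Gaffney n (fun t => (1 - P t) ^ M) ((2 * (1 + C₁)) ^ M) (4 ^ M * c) :=
    ((gaffney_one n c).sub hP zero_le_one hC₁.le).pow (by positivity) hc M
  set r := (2 : ℝ) ^ (j - 1) * ℓ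
  have hr : ℓ ≤ r := le_mul_of_one_le_left hℓ.le (one_le_pow₀ one_le_two)
  have hannulus : cube z (2 ^ j * ℓ) \ cube z r ⊆ {y | ∃ i, r / 2 ≤ |y i - z i|} :=
    fun y hy => by
      obtain ⟨i, hi⟩ := not_forall.1 hy.2
      exact ⟨i, (not_le.1 hi).le⟩
  have hexp : -((r - ℓ) / 2) ^ 2 / (4 ^ M * c * ℓ ^ 2) =
      -(1 / (4 * (4 ^ M * c))) * ((2 : ℝ) ^ (j - 1) - 1) ^ 2 := by
    field_simp
    ring
  calc _ ≤ eLpNorm ({y | ∃ i, r / 2 ≤ |y i - z i|}.indicator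
          ⇑((((1 : L2 n →L[ℂ] L2 n) - P (ℓ ^ 2)) ^ M) f)) 2 volume :=
        eLpNorm_mono fun x => norm_indicator_le_of_subset hannulus _ x
    _ ≤ ENNReal.ofReal ((2 * (1 + C₁)) ^ M *
          Real.exp (-((r - ℓ) / 2) ^ 2 / (4 ^ M * c * ℓ ^ 2))) * eLpNorm f 2 volume :=
        hQ.eLpNorm_indicator_le_of_le_dist (by positivity) (by positivity) (isClosed_cube z ℓ)
          (isClosed_setOf_exists_le_abs_sub z _) (by linarith)
          (fun x hx y hy => sub_div_two_le_dist_of_mem_cube hx hy) (by positivity) hf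
    _ ≤ _ := by
        rw [hexp, mul_assoc]
        gcongr
        exact hdecay j hj

/-- Rapid decay, on the dyadic annuli `S_j(Q) = 2^jQ ∖ 2^{j-1}Q`, of
`(I − P_{ℓ(Q)²})^M f` for `f` supported in the cube `Q`. -/
theorem statement7 (n : ℕ) (hn : 1 ≤ n) (M : ℕ) (hM : 1 ≤ M) (N C₁ c : ℝ)
    (hN : 0 < N) (hC₁ : 0 < C₁) (hc : 0 < c) :
    ∃ C > 0, ∀ P : ℝ → L2 n →L[ℂ] L2 n, Gaffney n P C₁ c →
      ∀ (z : Euc n) (ℓ : ℝ), 0 < ℓ →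
      ∀ f : L2 n, (∀ᵐ x ∂(volume : Measure (Euc n)), x ∉ cube z ℓ → f x = 0) →
      ∀ j : ℕ, 1 ≤ j →
        eLpNorm ((cube z ((2 : ℝ) ^ j * ℓ) \ cube z ((2 : ℝ) ^ (j - 1) * ℓ)).indicator
            (⇑((((1 : L2 n →L[ℂ] L2 n) - P (ℓ ^ 2)) ^ M) f))) 2 volume ≤
          ENNReal.ofReal (C * (2 : ℝ) ^ (-(j : ℝ) * N)) * eLpNorm (⇑f) 2 volume :=
  statement7_general n M N C₁ c hC₁ hc
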